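/- arXiv:2603.27868 — 14 statements merged into one kernel-verified Lean document; each statement's English description precedes it below -/
import Mathlib

section
/- Let the pair (ρ^AI, ρ^H) be consistent with the Luce Alignment Model with parameters (u, v, α). Then ρ^AI satisfies IIA if and only if α = 0, or α = 1, or there exists λ > 0 such that v(x) = λ·u(x) for all x ∈ X. -/
open Finset

/-- A stochastic choice function: values in `[0,1]`, positive only on the menu,
and summing to one over each nonempty menu. -/
def IsSCF {X : Type*} (ρ : X → Finset X → ℝ) : Prop :=
  ∀ S : Finset X, S.Nonempty →
    (∀ x, 0 ≤ ρ x S ∧ ρ x S ≤ 1) ∧ (∀ x, 0 < ρ x S → x ∈ S) ∧ (∑ x ∈ S, ρ x S) = 1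

/-- Independence of Irrelevant Alternatives. -/
def IIA {X : Type*} [DecidableEq X] (ρ : X → Finset X → ℝ) : Prop :=
  ∀ S T : Finset X, S.Nonempty → T.Nonempty →
    ∀ x ∈ S ∩ T, ∀ y ∈ S ∩ T, ρ x S * ρ y T = ρ x T * ρ y S

/-- Own instability `Δ_{xy}(S,T|ρ)`. -/
noncomputable def Delta {X : Type*} (ρ : X → Finset X → ℝ) (x y : X) (S T : Finset X) : ℝ :=
  ρ x S * ρ y T - ρ y S * ρ x T

/-- Cross instability `Γ_{xy}(S,T|ρ,ρ')`. -/
noncomputable def Gamma {X : Type*} (ρ ρ' : X → Finset X → ℝ) (x y : X) (S T : Finset X) : ℝ :=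
  ρ x S * ρ' y T - ρ y S * ρ' x T

/-- Composite instability `Φ_{xy}(S,T|ρ,ρ')`. -/
noncomputable def Phi {X : Type*} (ρ ρ' : X → Finset X → ℝ) (x y : X) (S T : Finset X) : ℝ :=
  Gamma ρ ρ' x y S T + Gamma ρ' ρ x y S T

/-- The Luce rule with utility `u`. -/
noncomputable def LuceRule {X : Type*} (u : X → ℝ) (x : X) (S : Finset X) : ℝ :=
  u x / ∑ y ∈ S, u y

/-- `ρAI` is consistent with the Luce Alignment Model with parameters `(u, v, α)`. -/
def LAM1 {X : Type*} (ρAI : X → Finset X → ℝ) (u v : X → ℝ) (α : ℝ) : Prop :=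
  (∀ x, 0 < u x) ∧ (∀ x, 0 < v x) ∧ 0 ≤ α ∧ α ≤ 1 ∧
    ∀ S : Finset X, S.Nonempty → ∀ x ∈ S,
      ρAI x S = α * (u x / ∑ y ∈ S, u y) + (1 - α) * (v x / ∑ y ∈ S, v y)

/-- The pair `(ρAI, ρH)` is consistent with the Luce Alignment Model
with parameters `(u, v, α)`. -/
def LAMpair {X : Type*} (ρAI ρH : X → Finset X → ℝ) (u v : X → ℝ) (α : ℝ) : Prop :=
  LAM1 ρAI u v α ∧
    ∀ S : Finset X, S.Nonempty → ∀ x ∈ S, ρH x S = u x / ∑ y ∈ S, u y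

/-!
Expanding products, the IIA defect `Delta` of a mixture `α • ρ₁ + (1 - α) • ρ₂` is
`α² Δ(ρ₁) + (1 - α)² Δ(ρ₂) + α (1 - α) Φ(ρ₁, ρ₂)`. Luce rules have no defect, and for two Luce
rules `Φ(x, y, S, T) = (u x v y - v x u y) * ((U_S V_T)⁻¹ - (U_T V_S)⁻¹)`. So for `0 < α < 1`,
IIA says that for each pair `x, y` either `u/v` takes the same value at `x` and `y`, or the
aggregate ratio `U/V` agrees on all menus containing both. Given a third alternative `z`,
applying this to the menus `{x, y} ⊆ {x, y, z}` and `{x, z} ⊆ {x, y, z}` shows that `u/v` is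
constant.
-/

lemma cross_eq_zero_of_triple {ux uy uz vx vy vz : ℝ} (hx : 0 < ux) (hy : 0 < uy) (hz : 0 < uz)
    (hxy : ux * vy - vx * uy ≠ 0 → uz * (vx + vy) = (ux + uy) * vz)
    (hxz : ux * vz - vx * uz ≠ 0 → uy * (vx + vz) = (ux + uz) * vy) :
    ux * vy - vx * uy = 0 := by
  -- with `d(a,b) = ua * vb - va * ub`, both cases rest on `uz d(x,y) - uy d(x,z) + ux d(y,z) = 0`
  by_contra hd
  have hbc := hxy hd
  by_cases hb : ux * vz - vx * uz = 0
  · have : uz * (ux * vy - vx * uy) = 0 := by linear_combination (ux + uy) * hb + ux * hbc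
    exact hd ((mul_eq_zero.mp this).resolve_left hz.ne')
  · have hca := hxz hb
    have : (ux + uy + uz) * (ux * vy - vx * uy) = 0 := by
      linear_combination -(ux + uy) * hca - uy * hbc
    exact hd ((mul_eq_zero.mp this).resolve_left (by positivity))

section LuceMixture

variable {X : Type*}

lemma iia_iff_delta_eq_zero [DecidableEq X] (ρ : X → Finset X → ℝ) :
    IIA ρ ↔ ∀ S T : Finset X, S.Nonempty → T.Nonempty →
      ∀ x ∈ S ∩ T, ∀ y ∈ S ∩ T, Delta ρ x y S T = 0 := by
  simp only [IIA, Delta, sub_eq_zero, mul_comm]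

lemma delta_eq_of_mix {ρ ρ₁ ρ₂ : X → Finset X → ℝ} {α : ℝ} {x y : X} {S T : Finset X}
    (hxS : ρ x S = α * ρ₁ x S + (1 - α) * ρ₂ x S) (hyS : ρ y S = α * ρ₁ y S + (1 - α) * ρ₂ y S)
    (hxT : ρ x T = α * ρ₁ x T + (1 - α) * ρ₂ x T) (hyT : ρ y T = α * ρ₁ y T + (1 - α) * ρ₂ y T) :
    Delta ρ x y S T = α ^ 2 * Delta ρ₁ x y S T + (1 - α) ^ 2 * Delta ρ₂ x y S T +
      α * (1 - α) * Phi ρ₁ ρ₂ x y S T := by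
  simp only [Delta, Phi, Gamma, hxS, hyS, hxT, hyT]
  ring

lemma delta_luceRule (w : X → ℝ) (x y : X) (S T : Finset X) :
    Delta (LuceRule w) x y S T = 0 := by
  simp only [Delta, LuceRule]
  ring

lemma phi_luceRule (u v : X → ℝ) (x y : X) (S T : Finset X) :
    Phi (LuceRule u) (LuceRule v) x y S T = (u x * v y - v x * u y) *
      (((∑ t ∈ S, u t) * ∑ t ∈ T, v t)⁻¹ - ((∑ t ∈ T, u t) * ∑ t ∈ S, v t)⁻¹) := by
  simp only [Phi, Gamma, LuceRule, div_eq_mul_inv, mul_inv]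
  ring

lemma delta_eq_of_lam1 [DecidableEq X] {ρ : X → Finset X → ℝ} {u v : X → ℝ} {α : ℝ}
    (h : LAM1 ρ u v α) {S T : Finset X} (hS : S.Nonempty) (hT : T.Nonempty) {x y : X}
    (hx : x ∈ S ∩ T) (hy : y ∈ S ∩ T) :
    Delta ρ x y S T = α * (1 - α) * Phi (LuceRule u) (LuceRule v) x y S T := by
  rw [Finset.mem_inter] at hx hy
  have hmix := h.2.2.2.2
  rw [delta_eq_of_mix (ρ₁ := LuceRule u) (ρ₂ := LuceRule v) (hmix S hS x hx.1)
    (hmix S hS y hy.1) (hmix T hT x hx.2) (hmix T hT y hy.2), delta_luceRule, delta_luceRule]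
  ring

lemma eq_of_phi_luceRule_pair_triple_eq_zero [DecidableEq X] {u v : X → ℝ} {x y z : X}
    (hxy : x ≠ y) (hxz : x ≠ z) (hyz : y ≠ z)
    (h : Phi (LuceRule u) (LuceRule v) x y {x, y} {x, y, z} = 0)
    (hd : u x * v y - v x * u y ≠ 0) :
    u z * (v x + v y) = (u x + u y) * v z := by
  have hsum : ∀ w : X → ℝ, ∑ t ∈ ({x, y, z} : Finset X), w t = (w x + w y) + w z := by
    intro w
    rw [Finset.sum_insert (by simp [hxy, hxz]), Finset.sum_pair hyz, add_assoc]
  rw [phi_luceRule, hsum, hsum, Finset.sum_pair hxy, Finset.sum_pair hxy] at h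
  have hratio := (mul_eq_zero.mp h).resolve_left hd
  rw [sub_eq_zero, inv_inj] at hratio
  linear_combination -hratio

lemma cross_eq_zero_of_phi_luceRule_eq_zero [DecidableEq X] {u v : X → ℝ}
    (hu : ∀ x, 0 < u x)
    (hΦ : ∀ S T : Finset X, S.Nonempty → T.Nonempty →
      ∀ x ∈ S ∩ T, ∀ y ∈ S ∩ T, Phi (LuceRule u) (LuceRule v) x y S T = 0)
    {x y z : X} (hxy : x ≠ y) (hxz : x ≠ z) (hyz : y ≠ z) :
    u x * v y - v x * u y = 0 :=
  cross_eq_zero_of_triple (hu x) (hu y) (hu z)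
    (eq_of_phi_luceRule_pair_triple_eq_zero hxy hxz hyz
      (hΦ _ _ (by simp) (by simp) x (by simp) y (by simp)))
    (eq_of_phi_luceRule_pair_triple_eq_zero hxz hxy hyz.symm
      (hΦ _ _ (by simp) (by simp) x (by simp) z (by simp)))

lemma exists_pos_eq_mul_of_cross_eq_zero [Nonempty X] {u v : X → ℝ}
    (hu : ∀ x, 0 < u x) (hv : ∀ x, 0 < v x) (h : ∀ x y, u x * v y - v x * u y = 0) :
    ∃ l : ℝ, 0 < l ∧ ∀ x, v x = l * u x := by
  obtain ⟨x₀⟩ := ‹Nonempty X›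
  refine ⟨v x₀ / u x₀, div_pos (hv x₀) (hu x₀), fun x => ?_⟩
  rw [div_mul_eq_mul_div, eq_div_iff (hu x₀).ne']
  linear_combination -h x x₀

end LuceMixture

theorem lam_iia_characterization_general {X : Type*} [Fintype X] [DecidableEq X]
    (hcard : 3 ≤ Fintype.card X)
    (ρAI ρH : X → Finset X → ℝ)
    (u v : X → ℝ) (α : ℝ) (hLAM : LAMpair ρAI ρH u v α) :
    IIA ρAI ↔ α = 0 ∨ α = 1 ∨ ∃ l : ℝ, 0 < l ∧ ∀ x, v x = l * u x := by
  have hlam := hLAM.1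
  obtain ⟨hu, hv, -⟩ := hLAM.1
  rw [iia_iff_delta_eq_zero]
  constructor
  · intro hIIA
    by_cases hα : α * (1 - α) = 0
    · rcases mul_eq_zero.mp hα with h | h
      exacts [Or.inl h, Or.inr (Or.inl (by linarith))]
    have : Nonempty X := Fintype.card_pos_iff.mp (by omega)
    refine Or.inr (Or.inr (exists_pos_eq_mul_of_cross_eq_zero hu hv fun x y => ?_))
    rcases eq_or_ne x y with rfl | hxy
    · ring
    obtain ⟨z, hzx, hzy⟩ := ENat.exists_ne_ne_of_three_le
      (by rw [ENat.card_eq_coe_fintype_card]; exact_mod_cast hcard) x y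
    refine cross_eq_zero_of_phi_luceRule_eq_zero hu (fun S T hS hT a ha b hb => ?_)
      hxy hzx.symm hzy.symm
    have hΔ := hIIA S T hS hT a ha b hb
    rw [delta_eq_of_lam1 hlam hS hT ha hb] at hΔ
    exact (mul_eq_zero.mp hΔ).resolve_left hα
  · intro h S T hS hT x hx y hy
    rw [delta_eq_of_lam1 hlam hS hT hx hy, phi_luceRule]
    rcases h with rfl | rfl | ⟨l, -, hl⟩
    · ring
    · ring
    · rw [hl x, hl y]
      ring

theorem lam_iia_characterization {X : Type*} [Fintype X] [DecidableEq X]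
    (hcard : 3 ≤ Fintype.card X)
    (ρAI ρH : X → Finset X → ℝ) (hAI : IsSCF ρAI) (hH : IsSCF ρH)
    (u v : X → ℝ) (α : ℝ) (hLAM : LAMpair ρAI ρH u v α) :
    IIA ρAI ↔ α = 0 ∨ α = 1 ∨ ∃ l : ℝ, 0 < l ∧ ∀ x, v x = l * u x :=
  lam_iia_characterization_general hcard ρAI ρH u v α hLAM
end

section
/- Suppose the pair (ρ^AI, ρ^H) is consistent with the Luce Alignment Model with parameters (u, v, α). If there exist nonempty sets S, T ⊆ X and x, y ∈ S ∩ T with Δ_{xy}(S,T|ρ^AI) ≠ 0 (an IIA violation), then Φ_{xy}(S,T|ρ^AI, ρ^H) ≠ 0 and α = Δ_{xy}(S,T|ρ^AI) / Φ_{xy}(S,T|ρ^AI, ρ^H). -/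
open Finset

theorem lam_compliance_identification {X : Type*} [Fintype X] [DecidableEq X]
    (hcard : 3 ≤ Fintype.card X)
    (ρAI ρH : X → Finset X → ℝ) (hAI : IsSCF ρAI) (hH : IsSCF ρH)
    (u v : X → ℝ) (α : ℝ) (hLAM : LAMpair ρAI ρH u v α)
    (S T : Finset X) (hS : S.Nonempty) (hT : T.Nonempty)
    (x y : X) (hx : x ∈ S ∩ T) (hy : y ∈ S ∩ T)
    (hΔ : Delta ρAI x y S T ≠ 0) :
    Phi ρAI ρH x y S T ≠ 0 ∧ α = Delta ρAI x y S T / Phi ρAI ρH x y S T := by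
  obtain ⟨⟨hu, hv, hα0, hα1, hAIeq⟩, hHeq⟩ := hLAM
  obtain ⟨hxS, hxT⟩ := Finset.mem_inter.mp hx
  obtain ⟨hyS, hyT⟩ := Finset.mem_inter.mp hy
  have huS : (0:ℝ) < ∑ z ∈ S, u z := Finset.sum_pos (fun z _ => hu z) hS
  have huT : (0:ℝ) < ∑ z ∈ T, u z := Finset.sum_pos (fun z _ => hu z) hT
  have hvS : (0:ℝ) < ∑ z ∈ S, v z := Finset.sum_pos (fun z _ => hv z) hS
  have hvT : (0:ℝ) < ∑ z ∈ T, v z := Finset.sum_pos (fun z _ => hv z) hT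
  have key : Delta ρAI x y S T = α * Phi ρAI ρH x y S T := by
    simp only [Delta, Phi, Gamma, hAIeq S hS x hxS, hAIeq S hS y hyS,
      hAIeq T hT x hxT, hAIeq T hT y hyT, hHeq S hS x hxS, hHeq S hS y hyS,
      hHeq T hT x hxT, hHeq T hT y hyT]
    field_simp
    ring
  have hΦ : Phi ρAI ρH x y S T ≠ 0 := by
    intro h
    rw [key, h, mul_zero] at hΔ
    exact hΔ rfl
  exact ⟨hΦ, by rw [key]; field_simp⟩
end

section
/- If the pair (ρ^AI, ρ^H) is consistent with the Luce Alignment Model with parameters (u, v, α), then for all nonempty S, T ⊆ X and all x, y ∈ S ∩ T, Δ_{xy}(S,T|ρ^AI) = α · Φ_{xy}(S,T|ρ^AI, ρ^H). -/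
open Finset

theorem lam_proportionality {X : Type*} [Fintype X] [DecidableEq X]
    (hcard : 3 ≤ Fintype.card X)
    (ρAI ρH : X → Finset X → ℝ) (hAI : IsSCF ρAI) (hH : IsSCF ρH)
    (u v : X → ℝ) (α : ℝ) (hLAM : LAMpair ρAI ρH u v α) :
    ∀ S T : Finset X, S.Nonempty → T.Nonempty →
      ∀ x ∈ S ∩ T, ∀ y ∈ S ∩ T,
        Delta ρAI x y S T = α * Phi ρAI ρH x y S T := by
  obtain ⟨⟨hu, hv, _, _, hAIeq⟩, hHeq⟩ := hLAM
  intro S T hS hT x hx y hy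
  rw [Finset.mem_inter] at hx hy
  have hUS : 0 < ∑ z ∈ S, u z := Finset.sum_pos (fun z _ => hu z) hS
  have hUT : 0 < ∑ z ∈ T, u z := Finset.sum_pos (fun z _ => hu z) hT
  have hVS : 0 < ∑ z ∈ S, v z := Finset.sum_pos (fun z _ => hv z) hS
  have hVT : 0 < ∑ z ∈ T, v z := Finset.sum_pos (fun z _ => hv z) hT
  simp only [Delta, Phi, Gamma,
    hAIeq S hS x hx.1, hAIeq S hS y hy.1, hAIeq T hT x hx.2, hAIeq T hT y hy.2,
    hHeq S hS x hx.1, hHeq S hS y hy.1, hHeq T hT x hx.2, hHeq T hT y hy.2]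
  field_simp
  ring
end

section
/- Suppose the pair (ρ^AI, ρ^H) is consistent with the Luce Alignment Model with parameters (u, v, α) and also with parameters (u', v', α'), and suppose ρ^AI ≠ ρ^H (that is, there exist a nonempty S ⊆ X and x ∈ S with ρ^AI(x,S) ≠ ρ^H(x,S)). Then α = α'. -/
open Finset

lemma alg_key (A B C ux uy vx vy wx wy uS uT vS vT wS wT : ℝ)
    (huS : uS ≠ 0) (hvS : vS ≠ 0) (huT : uT ≠ 0) (hvT : vT ≠ 0)
    (hwS : wS ≠ 0) (hwT : wT ≠ 0)
    (e1 : C * (wx / wS) = A * (ux / uS) + B * (vx / vS))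
    (e2 : C * (wy / wT) = A * (uy / uT) + B * (vy / vT))
    (e3 : C * (wy / wS) = A * (uy / uS) + B * (vy / vS))
    (e4 : C * (wx / wT) = A * (ux / uT) + B * (vx / vT)) :
    A * B * (ux * vy - uy * vx) * (vS * uT - uS * vT) = 0 := by
  have h0 : (A * (ux / uS) + B * (vx / vS)) * (A * (uy / uT) + B * (vy / vT))
      = (A * (uy / uS) + B * (vy / vS)) * (A * (ux / uT) + B * (vx / vT)) := by
    rw [← e1, ← e2, ← e3, ← e4]
    field_simp
  field_simp at h0
  linear_combination h0

lemma arith_key (a b c p q r : ℝ) (ha : 0 < a) (hb : 0 < b) (hc : 0 < c)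
    (hp : 0 < p) (hq : 0 < q) (hr : 0 < r) (hD : a * q ≠ b * p)
    (h1 : (p + q) * (a + b + c) = (a + b) * (p + q + r))
    (h2 : a * r = c * p ∨ (p + r) * (a + b + c) = (a + c) * (p + q + r)) : False := by
  have hc1 : c * (p + q) = r * (a + b) := by linear_combination h1
  rcases h2 with har | h2e
  · have hcq : c * q = r * b := by linear_combination hc1 + har
    have : a * q * (c * r) = b * p * (c * r) := by
      linear_combination (c * q) * har + (c * p) * hcq
    exact hD (mul_right_cancel₀ (ne_of_gt (mul_pos hc hr)) this)
  · have hb2 : b * (p + r) = q * (a + c) := by linear_combination h2e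
    rcases lt_trichotomy (a * q) (b * p) with h | h | h
    · nlinarith [mul_pos hp hq, mul_pos hq hr, mul_pos hp hr, mul_pos hr hr,
        mul_pos (mul_pos hc hp) hq, mul_pos hb hr, mul_pos ha hq]
    · exact hD h
    · nlinarith [mul_pos hp hq, mul_pos hq hr, mul_pos hp hr, mul_pos hr hr,
        mul_pos (mul_pos hc hp) hq, mul_pos hb hr, mul_pos ha hq]

theorem lam_alpha_unique {X : Type*} [Fintype X] [DecidableEq X]
    (hcard : 3 ≤ Fintype.card X)
    (ρAI ρH : X → Finset X → ℝ) (hAI : IsSCF ρAI) (hH : IsSCF ρH)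
    (u v u' v' : X → ℝ) (α α' : ℝ)
    (hLAM : LAMpair ρAI ρH u v α) (hLAM' : LAMpair ρAI ρH u' v' α')
    (hne : ∃ S : Finset X, S.Nonempty ∧ ∃ x ∈ S, ρAI x S ≠ ρH x S) :
    α = α' := by
  obtain ⟨⟨hu, hv, hα0, hα1, hAIf⟩, hHf⟩ := hLAM
  obtain ⟨⟨hu', hv', hα'0, hα'1, hAIf'⟩, hHf'⟩ := hLAM'
  obtain ⟨S0, hS0, x0, hx0, hρ⟩ := hne
  -- positivity of sums
  have usum : ∀ S : Finset X, S.Nonempty → 0 < ∑ y ∈ S, u y :=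
    fun S hS => Finset.sum_pos (fun i _ => hu i) hS
  have vsum : ∀ S : Finset X, S.Nonempty → 0 < ∑ y ∈ S, v y :=
    fun S hS => Finset.sum_pos (fun i _ => hv i) hS
  have v'sum : ∀ S : Finset X, S.Nonempty → 0 < ∑ y ∈ S, v' y :=
    fun S hS => Finset.sum_pos (fun i _ => hv' i) hS
  -- α ≠ 1 and α' ≠ 1
  have hαne1 : α ≠ 1 := by
    intro h
    apply hρ
    rw [hAIf S0 hS0 x0 hx0, hHf S0 hS0 x0 hx0, h]
    ring
  have hα'ne1 : α' ≠ 1 := by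
    intro h
    apply hρ
    rw [hAIf' S0 hS0 x0 hx0, hHf' S0 hS0 x0 hx0, h]
    ring
  -- the Luce fractions for v and u differ at (x0, S0)
  have hVU : v x0 / ∑ y ∈ S0, v y ≠ u x0 / ∑ y ∈ S0, u y := by
    intro h
    apply hρ
    rw [hAIf S0 hS0 x0 hx0, hHf S0 hS0 x0 hx0, h]
    ring
  -- find y0 ∈ S0 with u x0 * v y0 ≠ v x0 * u y0
  have hy0 : ∃ y ∈ S0, u x0 * v y ≠ v x0 * u y := by
    by_contra hcon
    push_neg at hcon
    apply hVU
    have hsum : u x0 * ∑ y ∈ S0, v y = v x0 * ∑ y ∈ S0, u y := by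
      rw [Finset.mul_sum, Finset.mul_sum]
      exact Finset.sum_congr rfl (fun y hy => hcon y hy)
    rw [div_eq_div_iff (ne_of_gt (vsum S0 hS0)) (ne_of_gt (usum S0 hS0))]
    linear_combination -hsum
  obtain ⟨y0, hy0S, hD⟩ := hy0
  have hxy : x0 ≠ y0 := by
    intro h; apply hD; rw [← h]; ring
  -- third element
  have hz0 : ∃ z0 : X, z0 ≠ x0 ∧ z0 ≠ y0 := by
    have hlt : ({x0, y0} : Finset X).card < (Finset.univ : Finset X).card := by
      calc ({x0, y0} : Finset X).card ≤ 2 := Finset.card_insert_le _ _ |>.trans (by simp)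
        _ < 3 := by norm_num
        _ ≤ (Finset.univ : Finset X).card := by rwa [Finset.card_univ]
    have hneu : ({x0, y0} : Finset X) ≠ Finset.univ := by
      intro h
      rw [h] at hlt
      exact lt_irrefl _ hlt
    obtain ⟨z, _, hz⟩ := Finset.exists_of_ssubset (Finset.ssubset_univ_iff.mpr hneu)
    simp only [Finset.mem_insert, Finset.mem_singleton, not_or] at hz
    exact ⟨z, hz.1, hz.2⟩
  obtain ⟨z0, hzx, hzy⟩ := hz0
  -- mixture identity
  by_contra hαα'
  have hA : α - α' ≠ 0 := sub_ne_zero.mpr hαα'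
  have hB : (1 : ℝ) - α ≠ 0 := sub_ne_zero.mpr (Ne.symm hαne1)
  have hC : (1 : ℝ) - α' ≠ 0 := sub_ne_zero.mpr (Ne.symm hα'ne1)
  have hmix : ∀ S : Finset X, S.Nonempty → ∀ x ∈ S,
      (1 - α') * (v' x / ∑ y ∈ S, v' y) =
        (α - α') * (u x / ∑ y ∈ S, u y) + (1 - α) * (v x / ∑ y ∈ S, v y) := by
    intro S hS x hx
    have h1 := hAIf S hS x hx
    have h2 := hAIf' S hS x hx
    have h3 := hHf S hS x hx
    have h4 := hHf' S hS x hx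
    have hu'eq : u' x / ∑ y ∈ S, u' y = u x / ∑ y ∈ S, u y := by rw [← h3, ← h4]
    rw [h1, hu'eq] at h2
    linarith [h2]
  -- abbreviations
  set a := u x0; set b := u y0; set c := u z0
  set p := v x0; set q := v y0; set r := v z0
  have ha := hu x0; have hb := hu y0; have hcc := hu z0
  have hp := hv x0; have hq := hv y0; have hr := hv z0
  -- explicit sets
  have hxy' : x0 ≠ y0 := hxy
  have hnx : x0 ∉ ({y0, z0} : Finset X) := by simp [hxy, Ne.symm hzx]
  have hnx2 : x0 ∉ ({z0} : Finset X) := by simp [Ne.symm hzx]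
  have hyz : y0 ≠ z0 := Ne.symm hzy
  have hxz : x0 ≠ z0 := Ne.symm hzx
  have sum_pair_u : ∀ (f : X → ℝ) (w1 w2 : X), w1 ≠ w2 → ∑ y ∈ ({w1, w2} : Finset X), f y = f w1 + f w2 :=
    fun f w1 w2 h => Finset.sum_pair h
  have sum_tri : ∀ (f : X → ℝ), ∑ y ∈ ({x0, y0, z0} : Finset X), f y = f x0 + f y0 + f z0 := by
    intro f
    rw [Finset.sum_insert hnx, Finset.sum_pair hyz]
    ring
  have hS1ne : ({x0, y0} : Finset X).Nonempty := ⟨x0, by simp⟩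
  have hS2ne : ({x0, z0} : Finset X).Nonempty := ⟨x0, by simp⟩
  have hTne : ({x0, y0, z0} : Finset X).Nonempty := ⟨x0, by simp⟩
  have memx1 : x0 ∈ ({x0, y0} : Finset X) := by simp
  have memy1 : y0 ∈ ({x0, y0} : Finset X) := by simp
  have memx2 : x0 ∈ ({x0, z0} : Finset X) := by simp
  have memz2 : z0 ∈ ({x0, z0} : Finset X) := by simp
  have memxT : x0 ∈ ({x0, y0, z0} : Finset X) := by simp
  have memyT : y0 ∈ ({x0, y0, z0} : Finset X) := by simp
  have memzT : z0 ∈ ({x0, y0, z0} : Finset X) := by simp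
  -- instantiate key lemma: config 1 (pair x0 y0, S = {x0,y0}, T = {x0,y0,z0})
  have e1 := hmix _ hS1ne x0 memx1
  have e3 := hmix _ hS1ne y0 memy1
  have e2 := hmix _ hTne y0 memyT
  have e4 := hmix _ hTne x0 memxT
  rw [sum_pair_u u x0 y0 hxy, sum_pair_u v x0 y0 hxy, sum_pair_u v' x0 y0 hxy] at e1 e3
  rw [sum_tri u, sum_tri v, sum_tri v'] at e2 e4
  have hS1u : (0:ℝ) < a + b := by linarith
  have hS1v : (0:ℝ) < p + q := by linarith
  have hS1v' : (0:ℝ) < v' x0 + v' y0 := by linarith [hv' x0, hv' y0]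
  have hS2u : (0:ℝ) < a + c := by linarith
  have hS2v : (0:ℝ) < p + r := by linarith
  have hS2v' : (0:ℝ) < v' x0 + v' z0 := by linarith [hv' x0, hv' z0]
  have hTu : (0:ℝ) < a + b + c := by linarith
  have hTv : (0:ℝ) < p + q + r := by linarith
  have hTv' : (0:ℝ) < v' x0 + v' y0 + v' z0 := by linarith [hv' x0, hv' y0, hv' z0]
  have key1 := alg_key (α - α') (1 - α) (1 - α') a b p q (v' x0) (v' y0)
      (a + b) (a + b + c) (p + q) (p + q + r) (v' x0 + v' y0) (v' x0 + v' y0 + v' z0)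
      (ne_of_gt hS1u) (ne_of_gt hS1v) (ne_of_gt hTu) (ne_of_gt hTv)
      (ne_of_gt hS1v') (ne_of_gt hTv') e1 e2 e3 e4
  -- config 2 (pair x0 z0, S = {x0,z0}, T = {x0,y0,z0})
  have f1 := hmix _ hS2ne x0 memx2
  have f3 := hmix _ hS2ne z0 memz2
  have f2 := hmix _ hTne z0 memzT
  have f4 := hmix _ hTne x0 memxT
  rw [sum_pair_u u x0 z0 hxz, sum_pair_u v x0 z0 hxz, sum_pair_u v' x0 z0 hxz] at f1 f3
  rw [sum_tri u, sum_tri v, sum_tri v'] at f2 f4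
  have key2 := alg_key (α - α') (1 - α) (1 - α') a c p r (v' x0) (v' z0)
      (a + c) (a + b + c) (p + r) (p + q + r) (v' x0 + v' z0) (v' x0 + v' y0 + v' z0)
      (ne_of_gt hS2u) (ne_of_gt hS2v) (ne_of_gt hTu) (ne_of_gt hTv)
      (ne_of_gt hS2v') (ne_of_gt hTv') f1 f2 f3 f4
  -- extract equations
  have hDne : a * q - b * p ≠ 0 := fun h => hD (by linear_combination h)
  have hM1 : (p + q) * (a + b + c) = (a + b) * (p + q + r) := by
    have h := mul_eq_zero.mp key1
    rcases h with h | h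
    · rcases mul_eq_zero.mp h with h' | h'
      · exact absurd (mul_eq_zero.mp h') (by push_neg; exact ⟨hA, hB⟩)
      · exact absurd h' hDne
    · linarith [h]
  have hM2 : a * r = c * p ∨ (p + r) * (a + b + c) = (a + c) * (p + q + r) := by
    have h := mul_eq_zero.mp key2
    rcases h with h | h
    · rcases mul_eq_zero.mp h with h' | h'
      · exact absurd (mul_eq_zero.mp h') (by push_neg; exact ⟨hA, hB⟩)
      · left; linarith [sub_eq_zero.mp h']
    · right; linarith [h]
  exact arith_key a b c p q r ha hb hcc hp hq hr (fun h => hDne (by linear_combination h)) hM1 hM2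
end

section
/- Suppose the pair (ρ^AI, ρ^H) is consistent with the Luce Alignment Model with parameters (u, v, α) and also with parameters (u', v', α'), and suppose ρ^AI ≠ ρ^H. Then there exist λ > 0 and μ > 0 such that u'(x) = λ·u(x) for all x ∈ X and v'(x) = μ·v(x) for all x ∈ X. -/
open Finset

theorem lam_utilities_unique_up_to_scale {X : Type*} [Fintype X] [DecidableEq X]
    (hcard : 3 ≤ Fintype.card X)
    (ρAI ρH : X → Finset X → ℝ) (hAI : IsSCF ρAI) (hH : IsSCF ρH)
    (u v u' v' : X → ℝ) (α α' : ℝ)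
    (hLAM : LAMpair ρAI ρH u v α) (hLAM' : LAMpair ρAI ρH u' v' α')
    (hne : ∃ S : Finset X, S.Nonempty ∧ ∃ x ∈ S, ρAI x S ≠ ρH x S) :
    ∃ l m : ℝ, 0 < l ∧ 0 < m ∧ (∀ x, u' x = l * u x) ∧ (∀ x, v' x = m * v x) := by
  obtain ⟨⟨hu, hv, hα0, hα1, hAIe⟩, hHe⟩ := hLAM
  obtain ⟨⟨hu', hv', hα0', hα1', hAIe'⟩, hHe'⟩ := hLAM'
  haveI : Nonempty X := Fintype.card_pos_iff.mp (by omega)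
  have huniv : (Finset.univ : Finset X).Nonempty := Finset.univ_nonempty
  have hsp : ∀ (w : X → ℝ), (∀ x, 0 < w x) → ∀ S : Finset X, S.Nonempty →
      0 < ∑ y ∈ S, w y := fun w hw S hS => Finset.sum_pos (fun i _ => hw i) hS
  have hqX : (0:ℝ) < ∑ y, u y := hsp u hu _ huniv
  have hqX' : (0:ℝ) < ∑ y, u' y := hsp u' hu' _ huniv
  have hpX : (0:ℝ) < ∑ y, v y := hsp v hv _ huniv
  have hpX' : (0:ℝ) < ∑ y, v' y := hsp v' hv' _ huniv
  -- u' is proportional to u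
  have hu'eq : ∀ x, u' x = ((∑ y, u' y) / (∑ y, u y)) * u x := by
    intro x
    have h1 := hHe Finset.univ huniv x (Finset.mem_univ x)
    have h2 := hHe' Finset.univ huniv x (Finset.mem_univ x)
    have h3 : u x / (∑ y, u y) = u' x / (∑ y, u' y) := by rw [← h1, ← h2]
    field_simp at h3 ⊢
    linarith [h3]
  -- ratios of u' agree with ratios of u on every menu
  have uratio : ∀ S : Finset X, S.Nonempty → ∀ x ∈ S,
      u' x / (∑ y ∈ S, u' y) = u x / (∑ y ∈ S, u y) := by
    intro S hS x hx
    have hsum : (∑ y ∈ S, u' y) = ((∑ y, u' y) / (∑ y, u y)) * ∑ y ∈ S, u y := by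
      rw [Finset.mul_sum]; exact Finset.sum_congr rfl fun y _ => hu'eq y
    have hl : (0:ℝ) < (∑ y, u' y) / (∑ y, u y) := div_pos hqX' hqX
    rw [hu'eq x, hsum, mul_div_mul_left _ _ (ne_of_gt hl)]
  -- the two LAM representations of ρAI coincide
  have AIboth : ∀ S : Finset X, S.Nonempty → ∀ x ∈ S,
      α * (u x / ∑ y ∈ S, u y) + (1 - α) * (v x / ∑ y ∈ S, v y)
        = α' * (u x / ∑ y ∈ S, u y) + (1 - α') * (v' x / ∑ y ∈ S, v' y) := by
    intro S hS x hx
    have h1 := hAIe S hS x hx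
    have h2 := hAIe' S hS x hx
    rw [uratio S hS x hx] at h2
    rw [← h1, ← h2]
  obtain ⟨S₀, hS₀, x₀, hx₀, hρ⟩ := hne
  have hqS₀ : (0:ℝ) < ∑ y ∈ S₀, u y := hsp u hu _ hS₀
  have hpS₀ : (0:ℝ) < ∑ y ∈ S₀, v y := hsp v hv _ hS₀
  have hHx₀ := hHe S₀ hS₀ x₀ hx₀
  have hAIx₀ := hAIe S₀ hS₀ x₀ hx₀
  have hαne : α ≠ 1 := by
    intro h; subst h
    apply hρ
    rw [hAIx₀, hHx₀]; ring
  have hαne' : α' ≠ 1 := by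
    intro h; subst h
    apply hρ
    have h2 := hAIe' S₀ hS₀ x₀ hx₀
    rw [uratio S₀ hS₀ x₀ hx₀] at h2
    rw [h2, hHx₀]; ring
  have hvune : v x₀ * (∑ y ∈ S₀, u y) ≠ u x₀ * (∑ y ∈ S₀, v y) := by
    intro h
    apply hρ
    have hr : v x₀ / (∑ y ∈ S₀, v y) = u x₀ / (∑ y ∈ S₀, u y) := by
      rw [div_eq_div_iff (ne_of_gt hpS₀) (ne_of_gt hqS₀)]
      linarith [h]
    rw [hAIx₀, hHx₀, hr]; ring
  by_cases hαα : α = α'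
  · -- easy case: same α, so v' proportional to v from the univ equation
    refine ⟨(∑ y, u' y) / (∑ y, u y), (∑ y, v' y) / (∑ y, v y),
      div_pos hqX' hqX, div_pos hpX' hpX, hu'eq, ?_⟩
    intro x
    have h := AIboth Finset.univ huniv x (Finset.mem_univ x)
    rw [← hαα] at h
    have h1 : (1 - α) * (v x / ∑ y, v y) = (1 - α) * (v' x / ∑ y, v' y) := by linarith
    have h2 : v x / ∑ y, v y = v' x / ∑ y, v' y :=
      mul_left_cancel₀ (sub_ne_zero.mpr (Ne.symm hαne)) h1
    rw [div_eq_div_iff (ne_of_gt hpX) (ne_of_gt hpX')] at h2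
    field_simp
    linarith [h2]
  · -- hard case: α ≠ α' forces v ∝ u, contradicting ρAI ≠ ρH
    exfalso
    set a : ℝ := 1 - α with ha_def
    set b : ℝ := α - α' with hb_def
    have ha : a ≠ 0 := sub_ne_zero.mpr (Ne.symm hαne)
    have hb : b ≠ 0 := sub_ne_zero.mpr hαα
    have hc : (1 - α') ≠ 0 := sub_ne_zero.mpr (Ne.symm hαne')
    -- the v'-Luce rule is a signed mixture of the v- and u- Luce rules
    have hA : ∀ S : Finset X, S.Nonempty → ∀ x ∈ S,
        (1 - α') * (v' x / ∑ y ∈ S, v' y)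
          = a * (v x / ∑ y ∈ S, v y) + b * (u x / ∑ y ∈ S, u y) := by
      intro S hS x hx
      have h := AIboth S hS x hx
      rw [ha_def, hb_def]; linarith
    -- cross-menu consistency of the v'-Luce rule
    have hAXY : ∀ T : Finset X, T.Nonempty → ∀ x ∈ T, ∀ y ∈ T,
        (a * (v x / ∑ z ∈ T, v z) + b * (u x / ∑ z ∈ T, u z))
          * (a * (v y / ∑ z, v z) + b * (u y / ∑ z, u z))
        = (a * (v x / ∑ z, v z) + b * (u x / ∑ z, u z))
          * (a * (v y / ∑ z ∈ T, v z) + b * (u y / ∑ z ∈ T, u z)) := by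
      intro T hT x hx y hy
      have h1 := hA T hT x hx
      have h2 := hA T hT y hy
      have h3 := hA Finset.univ huniv x (Finset.mem_univ x)
      have h4 := hA Finset.univ huniv y (Finset.mem_univ y)
      rw [← h1, ← h2, ← h3, ← h4]; ring
    -- key dichotomy
    have key : ∀ T : Finset X, T.Nonempty → ∀ x ∈ T, ∀ y ∈ T,
        v x * u y = u x * v y ∨
          (∑ z ∈ T, u z) * (∑ z, v z) = (∑ z ∈ T, v z) * (∑ z, u z) := by
      intro T hT x hx y hy
      have hvT : (0:ℝ) < ∑ z ∈ T, v z := hsp v hv _ hT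
      have huT : (0:ℝ) < ∑ z ∈ T, u z := hsp u hu _ hT
      have h := hAXY T hT x hx y hy
      have hid : a * b * ((v x * u y - u x * v y)
            * ((∑ z ∈ T, u z) * (∑ z, v z) - (∑ z ∈ T, v z) * (∑ z, u z)))
          = ((a * (v x / ∑ z ∈ T, v z) + b * (u x / ∑ z ∈ T, u z))
              * (a * (v y / ∑ z, v z) + b * (u y / ∑ z, u z))
            - (a * (v x / ∑ z, v z) + b * (u x / ∑ z, u z))
              * (a * (v y / ∑ z ∈ T, v z) + b * (u y / ∑ z ∈ T, u z)))
            * ((∑ z ∈ T, v z) * (∑ z ∈ T, u z) * (∑ z, v z) * (∑ z, u z)) := by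
        field_simp
        ring
      rw [h, sub_self, zero_mul] at hid
      have h0 : (v x * u y - u x * v y)
          * ((∑ z ∈ T, u z) * (∑ z, v z) - (∑ z ∈ T, v z) * (∑ z, u z)) = 0 := by
        have := mul_eq_zero.mp hid
        rcases this with h' | h'
        · exact absurd h' (mul_ne_zero ha hb)
        · exact h'
      rcases mul_eq_zero.mp h0 with h' | h'
      · left; linarith
      · right; linarith
    -- conclude v ∝ u on all of X
    have hall : ∀ x y : X, v x * u y = u x * v y := by
      by_contra hcon
      push_neg at hcon
      obtain ⟨x1, y1, hx1y1⟩ := hcon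
      have hxy : x1 ≠ y1 := by
        intro h; subst h; exact hx1y1 (by ring)
      -- pick a third element z
      have hz : ∃ z : X, z ≠ x1 ∧ z ≠ y1 := by
        have hcard2 : ({x1, y1} : Finset X).card ≤ 2 := by
          calc ({x1, y1} : Finset X).card ≤ ({y1} : Finset X).card + 1 :=
                Finset.card_insert_le _ _
            _ = 2 := by simp
        have : (Finset.univ \ ({x1, y1} : Finset X)).Nonempty := by
          rw [← Finset.card_pos, Finset.card_sdiff_of_subset (Finset.subset_univ _)]
          have : Fintype.card X = (Finset.univ : Finset X).card := rfl
          omega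
        obtain ⟨z, hz⟩ := this
        rw [Finset.mem_sdiff, Finset.mem_insert, Finset.mem_singleton] at hz
        exact ⟨z, fun h => hz.2 (Or.inl h), fun h => hz.2 (Or.inr h)⟩
      obtain ⟨z, hzx, hzy⟩ := hz
      have hpairmem : x1 ∈ ({x1, y1} : Finset X) := Finset.mem_insert_self _ _
      have hpairmem' : y1 ∈ ({x1, y1} : Finset X) := by simp
      have hpairne : ({x1, y1} : Finset X).Nonempty := ⟨x1, hpairmem⟩
      have hpairsum_u : (∑ w ∈ ({x1, y1} : Finset X), u w) = u x1 + u y1 :=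
        Finset.sum_pair hxy
      have hpairsum_v : (∑ w ∈ ({x1, y1} : Finset X), v w) = v x1 + v y1 :=
        Finset.sum_pair hxy
      have hEpair : (u x1 + u y1) * (∑ w, v w) = (v x1 + v y1) * (∑ w, u w) := by
        rcases key {x1, y1} hpairne x1 hpairmem y1 hpairmem' with h | h
        · exact absurd h hx1y1
        · rw [hpairsum_u, hpairsum_v] at h; exact h
      have hznotin : z ∉ ({x1, y1} : Finset X) := by
        simp [hzx, hzy]
      have htriplesum_u : (∑ w ∈ insert z ({x1, y1} : Finset X), u w)
          = u z + (u x1 + u y1) := by rw [Finset.sum_insert hznotin, hpairsum_u]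
      have htriplesum_v : (∑ w ∈ insert z ({x1, y1} : Finset X), v w)
          = v z + (v x1 + v y1) := by rw [Finset.sum_insert hznotin, hpairsum_v]
      have htriplene : (insert z ({x1, y1} : Finset X)).Nonempty :=
        ⟨z, Finset.mem_insert_self _ _⟩
      have hEtriple : (u z + (u x1 + u y1)) * (∑ w, v w)
          = (v z + (v x1 + v y1)) * (∑ w, u w) := by
        rcases key (insert z ({x1, y1} : Finset X)) htriplene x1
            (Finset.mem_insert_of_mem hpairmem) y1
            (Finset.mem_insert_of_mem hpairmem') with h | h
        · exact absurd h hx1y1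
        · rw [htriplesum_u, htriplesum_v] at h; exact h
      have hEz : u z * (∑ w, v w) = v z * (∑ w, u w) := by
        linear_combination hEtriple - hEpair
      -- step lemma: everything proportional via z
      have hstep : ∀ x : X, x ≠ z → u x * (∑ w, v w) = v x * (∑ w, u w) := by
        intro x hxz
        have hmem : x ∈ ({x, z} : Finset X) := Finset.mem_insert_self _ _
        have hmem' : z ∈ ({x, z} : Finset X) := by simp
        have hsu : (∑ w ∈ ({x, z} : Finset X), u w) = u x + u z := Finset.sum_pair hxz
        have hsv : (∑ w ∈ ({x, z} : Finset X), v w) = v x + v z := Finset.sum_pair hxz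
        rcases key {x, z} ⟨x, hmem⟩ x hmem z hmem' with h | h
        · -- v x * u z = u x * v z
          have huz : u z ≠ 0 := ne_of_gt (hu z)
          apply mul_right_cancel₀ huz
          calc u x * (∑ w, v w) * u z = u x * (u z * (∑ w, v w)) := by ring
            _ = u x * (v z * (∑ w, u w)) := by rw [hEz]
            _ = (u x * v z) * (∑ w, u w) := by ring
            _ = (v x * u z) * (∑ w, u w) := by rw [← h]
            _ = v x * (∑ w, u w) * u z := by ring
        · rw [hsu, hsv] at h
          linear_combination h - hEz
      have hx1p := hstep x1 (Ne.symm hzx)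
      have hy1p := hstep y1 (Ne.symm hzy)
      apply hx1y1
      have hprodne : (∑ w, v w) * (∑ w, u w) ≠ 0 :=
        mul_ne_zero (ne_of_gt hpX) (ne_of_gt hqX)
      apply mul_right_cancel₀ hprodne
      calc v x1 * u y1 * ((∑ w, v w) * (∑ w, u w))
          = (v x1 * (∑ w, u w)) * (u y1 * (∑ w, v w)) := by ring
        _ = (u x1 * (∑ w, v w)) * (v y1 * (∑ w, u w)) := by rw [← hx1p, ← hy1p]
        _ = u x1 * v y1 * ((∑ w, v w) * (∑ w, u w)) := by ring
    -- contradiction with hvune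
    apply hvune
    rw [Finset.mul_sum, Finset.mul_sum]
    exact Finset.sum_congr rfl fun y _ => hall x₀ y
end

section
/- If the pair (ρ^AI, ρ^H) is consistent with the Luce Alignment Model with parameters (u, v, α), then for all nonempty S, T, U ⊆ X, all x, y ∈ S ∩ T, and all z ∈ U: ρ^AI(z,U) · |Φ_{xy}(S,T|ρ^AI, ρ^H)| ≥ ρ^H(z,U) · |Δ_{xy}(S,T|ρ^AI)|, and the inequality is strict whenever Δ_{xy}(S,T|ρ^AI) ≠ 0 (the Bounded Divergence property). -/
open Finset

theorem lam_bounded_divergence {X : Type*} [Fintype X] [DecidableEq X]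
    (hcard : 3 ≤ Fintype.card X)
    (ρAI ρH : X → Finset X → ℝ) (hAI : IsSCF ρAI) (hH : IsSCF ρH)
    (u v : X → ℝ) (α : ℝ) (hLAM : LAMpair ρAI ρH u v α) :
    ∀ S T U : Finset X, S.Nonempty → T.Nonempty → U.Nonempty →
      ∀ x ∈ S ∩ T, ∀ y ∈ S ∩ T, ∀ z ∈ U,
        ρH z U * |Delta ρAI x y S T| ≤ ρAI z U * |Phi ρAI ρH x y S T| ∧
        (Delta ρAI x y S T ≠ 0 →
          ρH z U * |Delta ρAI x y S T| < ρAI z U * |Phi ρAI ρH x y S T|) := by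

  obtain ⟨⟨hu, hv, hα0, hα1, hρAI⟩, hρH⟩ := hLAM
  intro S T U hS hT hU x hx y hy z hz
  rw [Finset.mem_inter] at hx hy
  obtain ⟨hxS, hxT⟩ := hx
  obtain ⟨hyS, hyT⟩ := hy
  have hSu : (0:ℝ) < ∑ w ∈ S, u w := Finset.sum_pos (fun i _ => hu i) hS
  have hTu : (0:ℝ) < ∑ w ∈ T, u w := Finset.sum_pos (fun i _ => hu i) hT
  have hUu : (0:ℝ) < ∑ w ∈ U, u w := Finset.sum_pos (fun i _ => hu i) hU
  have hSv : (0:ℝ) < ∑ w ∈ S, v w := Finset.sum_pos (fun i _ => hv i) hS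
  have hTv : (0:ℝ) < ∑ w ∈ T, v w := Finset.sum_pos (fun i _ => hv i) hT
  have hUv : (0:ℝ) < ∑ w ∈ U, v w := Finset.sum_pos (fun i _ => hv i) hU
  have hA : (u x / ∑ w ∈ S, u w) * (u y / ∑ w ∈ T, u w)
      = (u y / ∑ w ∈ S, u w) * (u x / ∑ w ∈ T, u w) := by
    rw [div_mul_div_comm, div_mul_div_comm, mul_comm (u x) (u y)]
  have hB : (v x / ∑ w ∈ S, v w) * (v y / ∑ w ∈ T, v w)
      = (v y / ∑ w ∈ S, v w) * (v x / ∑ w ∈ T, v w) := by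
    rw [div_mul_div_comm, div_mul_div_comm, mul_comm (v x) (v y)]
  have key : Delta ρAI x y S T = α * Phi ρAI ρH x y S T := by
    unfold Delta Phi Gamma
    rw [hρAI S hS x hxS, hρAI S hS y hyS, hρAI T hT x hxT, hρAI T hT y hyT,
        hρH S hS x hxS, hρH S hS y hyS, hρH T hT x hxT, hρH T hT y hyT]
    linear_combination (-α^2) * hA + (1-α)^2 * hB
  have keyD : Delta ρAI x y S T = α * (1 - α) *
      ((u x / ∑ w ∈ S, u w) * (v y / ∑ w ∈ T, v w)
        - (u y / ∑ w ∈ S, u w) * (v x / ∑ w ∈ T, v w)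
        + (v x / ∑ w ∈ S, v w) * (u y / ∑ w ∈ T, u w)
        - (v y / ∑ w ∈ S, v w) * (u x / ∑ w ∈ T, u w)) := by
    unfold Delta
    rw [hρAI S hS x hxS, hρAI S hS y hyS, hρAI T hT x hxT, hρAI T hT y hyT]
    linear_combination α^2 * hA + (1-α)^2 * hB
  have hρAIz := hρAI U hU z hz
  have hρHz := hρH U hU z hz
  have hbz : (0:ℝ) < v z / ∑ w ∈ U, v w := div_pos (hv z) hUv
  have haz : (0:ℝ) < u z / ∑ w ∈ U, u w := div_pos (hu z) hUu
  have habs : (0:ℝ) ≤ |Phi ρAI ρH x y S T| := abs_nonneg _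
  rw [key, abs_mul, abs_of_nonneg hα0, hρAIz, hρHz]
  constructor
  · nlinarith [mul_nonneg (mul_nonneg (sub_nonneg.mpr hα1) hbz.le) habs]
  · intro hne
    have hαne : α ≠ 0 := fun h => hne (by rw [h]; ring)
    have hPhine : Phi ρAI ρH x y S T ≠ 0 := fun h => hne (by rw [h]; ring)
    have hαlt : α < 1 := by
      rcases lt_or_eq_of_le hα1 with h | h
      · exact h
      · exfalso
        apply hne
        rw [key] at keyD
        have : α * Phi ρAI ρH x y S T = 0 := by rw [keyD, ← h]; ring
        exact this
    have habspos : (0:ℝ) < |Phi ρAI ρH x y S T| := abs_pos.mpr hPhine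
    nlinarith [mul_pos (mul_pos (sub_pos.mpr hαlt) hbz) habspos]
end

section
/- If the pair (ρ^AI, ρ^H) is consistent with the Luce Alignment Model with parameters (u, v, α), then for all nonempty S, T ⊆ X and x, y ∈ S ∩ T: Δ_{xy}(S,T|ρ^AI) · Φ_{xy}(S,T|ρ^AI, ρ^H) ≥ 0 and |Δ_{xy}(S,T|ρ^AI)| ≤ |Φ_{xy}(S,T|ρ^AI, ρ^H)|, with both inequalities strict whenever Δ_{xy}(S,T|ρ^AI) ≠ 0 (the Bounded Instability property). -/
open Finset

theorem lam_bounded_instability {X : Type*} [Fintype X] [DecidableEq X]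
    (hcard : 3 ≤ Fintype.card X)
    (ρAI ρH : X → Finset X → ℝ) (hAI : IsSCF ρAI) (hH : IsSCF ρH)
    (u v : X → ℝ) (α : ℝ) (hLAM : LAMpair ρAI ρH u v α) :
    ∀ S T : Finset X, S.Nonempty → T.Nonempty →
      ∀ x ∈ S ∩ T, ∀ y ∈ S ∩ T,
        0 ≤ Delta ρAI x y S T * Phi ρAI ρH x y S T ∧
        |Delta ρAI x y S T| ≤ |Phi ρAI ρH x y S T| ∧
        (Delta ρAI x y S T ≠ 0 →
          0 < Delta ρAI x y S T * Phi ρAI ρH x y S T ∧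
          |Delta ρAI x y S T| < |Phi ρAI ρH x y S T|) := by
  obtain ⟨⟨hu, hv, hα0, hα1, hAIrule⟩, hHrule⟩ := hLAM
  intro S T hS hT x hx y hy
  rw [Finset.mem_inter] at hx hy
  have hUS : (0:ℝ) < ∑ z ∈ S, u z := Finset.sum_pos (fun i _ => hu i) hS
  have hUT : (0:ℝ) < ∑ z ∈ T, u z := Finset.sum_pos (fun i _ => hu i) hT
  have hVS : (0:ℝ) < ∑ z ∈ S, v z := Finset.sum_pos (fun i _ => hv i) hS
  have hVT : (0:ℝ) < ∑ z ∈ T, v z := Finset.sum_pos (fun i _ => hv i) hT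
  have hDP : Delta ρAI x y S T = α * Phi ρAI ρH x y S T := by
    simp only [Delta, Phi, Gamma, hAIrule S hS x hx.1, hAIrule S hS y hy.1,
      hAIrule T hT x hx.2, hAIrule T hT y hy.2, hHrule S hS x hx.1, hHrule S hS y hy.1,
      hHrule T hT x hx.2, hHrule T hT y hy.2]
    field_simp
    ring
  have hPf : Phi ρAI ρH x y S T * ((∑ z ∈ S, u z) * (∑ z ∈ S, v z) *
      (∑ z ∈ T, u z) * (∑ z ∈ T, v z)) =
      (1 - α) * ((u x * v y - u y * v x) *
        ((∑ z ∈ S, v z) * (∑ z ∈ T, u z) - (∑ z ∈ S, u z) * (∑ z ∈ T, v z))) := by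
    simp only [Phi, Gamma, hAIrule S hS x hx.1, hAIrule S hS y hy.1,
      hAIrule T hT x hx.2, hAIrule T hT y hy.2, hHrule S hS x hx.1, hHrule S hS y hy.1,
      hHrule T hT x hx.2, hHrule T hT y hy.2]
    field_simp
    ring
  have habs : |Delta ρAI x y S T| = α * |Phi ρAI ρH x y S T| := by
    rw [hDP, abs_mul, abs_of_nonneg hα0]
  refine ⟨?_, ?_, ?_⟩
  · rw [hDP, mul_assoc]
    exact mul_nonneg hα0 (mul_self_nonneg _)
  · rw [habs]
    exact mul_le_of_le_one_left (abs_nonneg _) hα1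
  · intro hDne
    have hPhine : Phi ρAI ρH x y S T ≠ 0 := by
      intro h; exact hDne (by rw [hDP, h, mul_zero])
    have hαpos : 0 < α := by
      rcases lt_or_eq_of_le hα0 with h | h
      · exact h
      · exact absurd (by rw [hDP, ← h, zero_mul]) hDne
    have hαlt : α < 1 := by
      rcases lt_or_eq_of_le hα1 with h | h
      · exact h
      · exfalso
        apply hPhine
        have h1 : (1 - α) = 0 := by rw [h]; ring
        have := hPf
        rw [h1, zero_mul] at this
        have hprodpos : (0:ℝ) < (∑ z ∈ S, u z) * (∑ z ∈ S, v z) *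
            (∑ z ∈ T, u z) * (∑ z ∈ T, v z) := by positivity
        exact (mul_eq_zero.mp this).resolve_right (ne_of_gt hprodpos)
    constructor
    · rw [hDP, mul_assoc]
      exact mul_pos hαpos (mul_self_pos.mpr hPhine)
    · rw [habs]
      exact mul_lt_of_lt_one_left (abs_pos.mpr hPhine) hαlt
end

section
/- Let ρ be a stochastic choice function satisfying positivity (ρ(x,S) > 0 for all x ∈ S ⊆ X, S nonempty). Then Δ_{xy}(S,T|ρ) = 0 for all nonempty S, T ⊆ X and all x, y ∈ S ∩ T if and only if there exists a utility function u : X → ℝ_{>0} such that ρ(x,S) = u(x)/∑_{y∈S} u(y) for all x ∈ S (i.e., ρ is consistent with the Luce rule). -/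
open Finset

theorem luce_iff_zero_own_instability {X : Type*} [Fintype X] [DecidableEq X]
    (hcard : 3 ≤ Fintype.card X)
    (ρ : X → Finset X → ℝ) (hSCF : IsSCF ρ)
    (hpos : ∀ S : Finset X, S.Nonempty → ∀ x ∈ S, 0 < ρ x S) :
    (∀ S T : Finset X, S.Nonempty → T.Nonempty →
      ∀ x ∈ S ∩ T, ∀ y ∈ S ∩ T, Delta ρ x y S T = 0) ↔
    (∃ u : X → ℝ, (∀ x, 0 < u x) ∧
      ∀ S : Finset X, S.Nonempty → ∀ x ∈ S, ρ x S = u x / ∑ y ∈ S, u y) := by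
  constructor
  · intro hD
    have hXne : (Finset.univ : Finset X).Nonempty := by
      rw [Finset.univ_nonempty_iff]
      exact Fintype.card_pos_iff.mp (by omega)
    refine ⟨fun x => ρ x Finset.univ, fun x => hpos _ hXne x (mem_univ x), ?_⟩
    intro S hS x hxS
    have key : ∀ y ∈ S, ρ x S * ρ y Finset.univ = ρ y S * ρ x Finset.univ := by
      intro y hyS
      have h := hD S Finset.univ hS hXne x (by simp [hxS]) y (by simp [hyS])
      unfold Delta at h
      linarith
    have hsum : ρ x S * ∑ y ∈ S, ρ y Finset.univ = ρ x Finset.univ := by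
      calc ρ x S * ∑ y ∈ S, ρ y Finset.univ
          = ∑ y ∈ S, ρ x S * ρ y Finset.univ := by rw [Finset.mul_sum]
        _ = ∑ y ∈ S, ρ y S * ρ x Finset.univ := Finset.sum_congr rfl key
        _ = (∑ y ∈ S, ρ y S) * ρ x Finset.univ := by rw [Finset.sum_mul]
        _ = ρ x Finset.univ := by rw [(hSCF S hS).2.2, one_mul]
    have hsumpos : 0 < ∑ y ∈ S, ρ y Finset.univ :=
      Finset.sum_pos (fun y hy => hpos _ hXne y (mem_univ y)) hS
    field_simp
    linarith
  · rintro ⟨u, hu, hL⟩ S T hS hT x hx y hy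
    have hxS := (mem_inter.mp hx).1
    have hxT := (mem_inter.mp hx).2
    have hyS := (mem_inter.mp hy).1
    have hyT := (mem_inter.mp hy).2
    unfold Delta
    rw [hL S hS x hxS, hL T hT y hyT, hL S hS y hyS, hL T hT x hxT]
    ring
end

section
/- Let ρ and ρ' be Luce rules on X with utility functions u, v : X → ℝ_{>0} respectively. Then for all nonempty S, T ⊆ X and x, y ∈ S ∩ T: Φ_{xy}(S,T|ρ,ρ') = [u(x)v(y) − u(y)v(x)] · [u(T)v(S) − u(S)v(T)] / (u(S)·u(T)·v(S)·v(T)). -/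
open Finset

theorem luce_composite_instability_formula {X : Type*} [Fintype X] [DecidableEq X]
    (hcard : 3 ≤ Fintype.card X)
    (ρ ρ' : X → Finset X → ℝ) (u v : X → ℝ)
    (hu : ∀ x, 0 < u x) (hv : ∀ x, 0 < v x)
    (hρ : ∀ S : Finset X, S.Nonempty → ∀ x ∈ S, ρ x S = u x / ∑ y ∈ S, u y)
    (hρ' : ∀ S : Finset X, S.Nonempty → ∀ x ∈ S, ρ' x S = v x / ∑ y ∈ S, v y) :
    ∀ S T : Finset X, S.Nonempty → T.Nonempty →
      ∀ x ∈ S ∩ T, ∀ y ∈ S ∩ T,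
        Phi ρ ρ' x y S T
          = ((u x * v y - u y * v x) *
              ((∑ a ∈ T, u a) * (∑ a ∈ S, v a) - (∑ a ∈ S, u a) * (∑ a ∈ T, v a))) /
            ((∑ a ∈ S, u a) * (∑ a ∈ T, u a) * (∑ a ∈ S, v a) * (∑ a ∈ T, v a)) := by
  intro S T hS hT x hx y hy
  simp only [mem_inter] at hx hy
  have hUS : 0 < ∑ a ∈ S, u a := Finset.sum_pos (fun a _ => hu a) hS
  have hUT : 0 < ∑ a ∈ T, u a := Finset.sum_pos (fun a _ => hu a) hT
  have hVS : 0 < ∑ a ∈ S, v a := Finset.sum_pos (fun a _ => hv a) hS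
  have hVT : 0 < ∑ a ∈ T, v a := Finset.sum_pos (fun a _ => hv a) hT
  simp only [Phi, Gamma, hρ S hS x hx.1, hρ S hS y hy.1, hρ T hT x hx.2, hρ T hT y hy.2,
    hρ' S hS x hx.1, hρ' S hS y hy.1, hρ' T hT x hx.2, hρ' T hT y hy.2]
  field_simp
  ring
end

section
/- Let ρ and ρ' be Luce rules on X with utility functions u, v : X → ℝ_{>0} respectively. Then Φ_{xy}(S,T|ρ,ρ') = 0 for all nonempty S, T ⊆ X and all x, y ∈ S ∩ T if and only if there exists λ > 0 such that v(x) = λ·u(x) for all x ∈ X. -/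
open Finset

theorem luce_zero_composite_iff_aligned {X : Type*} [Fintype X] [DecidableEq X]
    (hcard : 3 ≤ Fintype.card X)
    (ρ ρ' : X → Finset X → ℝ) (u v : X → ℝ)
    (hu : ∀ x, 0 < u x) (hv : ∀ x, 0 < v x)
    (hρ : ∀ S : Finset X, S.Nonempty → ∀ x ∈ S, ρ x S = u x / ∑ y ∈ S, u y)
    (hρ' : ∀ S : Finset X, S.Nonempty → ∀ x ∈ S, ρ' x S = v x / ∑ y ∈ S, v y) :
    (∀ S T : Finset X, S.Nonempty → T.Nonempty →
      ∀ x ∈ S ∩ T, ∀ y ∈ S ∩ T, Phi ρ ρ' x y S T = 0) ↔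
    (∃ l : ℝ, 0 < l ∧ ∀ x, v x = l * u x) := by

  constructor
  · intro h
    -- key polynomial identity for distinct triples
    have key : ∀ a b c : X, a ≠ b → a ≠ c → b ≠ c →
        (u a * v b - u b * v a) * ((v a + v b) * u c - (u a + u b) * v c) = 0 := by
      intro a b c hab hac hbc
      have hS : ({a, b} : Finset X).Nonempty := ⟨a, by simp⟩
      have hT : ({a, b, c} : Finset X).Nonempty := ⟨a, by simp⟩
      have haS : a ∈ ({a, b} : Finset X) ∩ {a, b, c} := by simp
      have hbS : b ∈ ({a, b} : Finset X) ∩ {a, b, c} := by simp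
      have hphi := h {a, b} {a, b, c} hS hT a haS b hbS
      have hsU : ∑ y ∈ ({a, b} : Finset X), u y = u a + u b := Finset.sum_pair hab
      have hsV : ∑ y ∈ ({a, b} : Finset X), v y = v a + v b := Finset.sum_pair hab
      have htU : ∑ y ∈ ({a, b, c} : Finset X), u y = u a + u b + u c := by
        rw [Finset.sum_insert (by simp [hab, hac]), Finset.sum_pair hbc]; ring
      have htV : ∑ y ∈ ({a, b, c} : Finset X), v y = v a + v b + v c := by
        rw [Finset.sum_insert (by simp [hab, hac]), Finset.sum_pair hbc]; ring
      have haS' : a ∈ ({a, b} : Finset X) := by simp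
      have hbS' : b ∈ ({a, b} : Finset X) := by simp
      have haT' : a ∈ ({a, b, c} : Finset X) := by simp
      have hbT' : b ∈ ({a, b, c} : Finset X) := by simp
      rw [Phi, Gamma, Gamma, hρ _ hS a haS', hρ _ hS b hbS', hρ _ hT a haT',
        hρ _ hT b hbT', hρ' _ hS a haS', hρ' _ hS b hbS', hρ' _ hT a haT',
        hρ' _ hT b hbT', hsU, hsV, htU, htV] at hphi
      have p1 : (0:ℝ) < u a + u b := by have := hu a; have := hu b; linarith
      have p2 : (0:ℝ) < v a + v b := by have := hv a; have := hv b; linarith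
      have p3 : (0:ℝ) < u a + u b + u c := by have := hu c; linarith
      have p4 : (0:ℝ) < v a + v b + v c := by have := hv c; linarith
      field_simp at hphi
      linear_combination hphi
    have main : ∀ a b : X, u a * v b = u b * v a := by
      intro a b
      by_cases hab : a = b
      · subst hab; ring
      have hcc : (({a, b} : Finset X)ᶜ).Nonempty := by
        have h2 : ({a, b} : Finset X).card ≤ 2 :=
          (Finset.card_insert_le _ _).trans (by simp)
        rw [← Finset.card_pos, Finset.card_compl]
        omega
      obtain ⟨c, hc⟩ := hcc
      simp only [Finset.mem_compl, Finset.mem_insert, Finset.mem_singleton, not_or] at hc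
      obtain ⟨hca, hcb⟩ := hc
      have H1 := key a b c hab (Ne.symm hca) (Ne.symm hcb)
      have H2 := key a c b (Ne.symm hca) hab hcb
      have H3 := key b c a (Ne.symm hcb) (Ne.symm hab) hca
      by_contra hne
      have hp : u a * v b - u b * v a ≠ 0 := fun hz => hne (by linarith [sub_eq_zero.mp hz])
      have h1 : (u a * v b - u b * v a) *
          ((u a * v c - u c * v a) + (u b * v c - u c * v b)) = 0 := by linear_combination -H1
      have h2 : (u a * v c - u c * v a) *
          ((u a * v b - u b * v a) - (u b * v c - u c * v b)) = 0 := by linear_combination -H2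
      have h3 : (u b * v c - u c * v b) *
          ((u a * v b - u b * v a) + (u a * v c - u c * v a)) = 0 := by linear_combination H3
      have hqs : (u a * v c - u c * v a) + (u b * v c - u c * v b) = 0 :=
        (mul_eq_zero.mp h1).resolve_left hp
      by_cases hq : u a * v c - u c * v a = 0
      · have hs : u b * v c - u c * v b = 0 := by linarith
        have : u c * (u a * v b - u b * v a) = 0 := by linear_combination u b * hq - u a * hs
        have := mul_eq_zero.mp this
        rcases this with h | h
        · exact absurd h (ne_of_gt (hu c))
        · exact hp h
      · have hps : (u a * v b - u b * v a) - (u b * v c - u c * v b) = 0 :=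
          (mul_eq_zero.mp h2).resolve_left hq
        have hzz : (u a + u b + u c) * (u a * v b - u b * v a) = 0 := by
          linear_combination (u a + u b) * hps + u b * hqs
        rcases mul_eq_zero.mp hzz with h | h
        · have := hu a; have := hu b; have := hu c; linarith
        · exact hp h
    have hpos : 0 < Fintype.card X := by omega
    have hne : Nonempty X := Fintype.card_pos_iff.mp hpos
    obtain ⟨x0⟩ := hne
    refine ⟨v x0 / u x0, div_pos (hv x0) (hu x0), fun x => ?_⟩
    have hmx := main x0 x
    rw [div_mul_eq_mul_div, eq_div_iff (hu x0).ne']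
    linear_combination hmx
  · rintro ⟨l, hl, hvl⟩ S T hS hT x hx y hy
    simp only [Finset.mem_inter] at hx hy
    have hsum : ∀ R : Finset X, ∑ z ∈ R, v z = l * ∑ z ∈ R, u z := by
      intro R; rw [Finset.mul_sum]; exact Finset.sum_congr rfl fun z _ => hvl z
    have hSU : (0:ℝ) < ∑ z ∈ S, u z := Finset.sum_pos (fun i _ => hu i) hS
    have hTU : (0:ℝ) < ∑ z ∈ T, u z := Finset.sum_pos (fun i _ => hu i) hT
    rw [Phi, Gamma, Gamma, hρ S hS x hx.1, hρ S hS y hy.1, hρ T hT x hx.2,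
      hρ T hT y hy.2, hρ' S hS x hx.1, hρ' S hS y hy.1, hρ' T hT x hx.2,
      hρ' T hT y hy.2, hsum S, hsum T, hvl x, hvl y]
    field_simp
    ring
end

section
/- Let ρ^AI be given by ρ^AI(x,S) = α·u(x)/u(S) + (1−α)·v(x)/v(S) for all x ∈ S, where u, v : X → ℝ_{>0} and α ∈ (0,1). For any three distinct alternatives a, b, c ∈ X, the IIA equality ρ^AI(a,{a,b,c})·ρ^AI(b,{a,b}) = ρ^AI(b,{a,b,c})·ρ^AI(a,{a,b}) holds if and only if u(a)·v(b) = u(b)·v(a) or u(c)·(v(a)+v(b)) = v(c)·(u(a)+u(b)). -/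
open Finset

theorem lam_triple_iia_condition {X : Type*} [Fintype X] [DecidableEq X]
    (hcard : 3 ≤ Fintype.card X)
    (u v : X → ℝ) (hu : ∀ x, 0 < u x) (hv : ∀ x, 0 < v x)
    (α : ℝ) (hα0 : 0 < α) (hα1 : α < 1)
    (ρAI : X → Finset X → ℝ)
    (hρ : ∀ S : Finset X, S.Nonempty → ∀ x ∈ S,
      ρAI x S = α * (u x / ∑ y ∈ S, u y) + (1 - α) * (v x / ∑ y ∈ S, v y))
    (a b c : X) (hab : a ≠ b) (hac : a ≠ c) (hbc : b ≠ c) :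
    ρAI a {a, b, c} * ρAI b {a, b} = ρAI b {a, b, c} * ρAI a {a, b} ↔
      u a * v b = u b * v a ∨ u c * (v a + v b) = v c * (u a + u b) := by

  have hS3 : ({a, b, c} : Finset X).Nonempty := ⟨a, by simp⟩
  have hS2 : ({a, b} : Finset X).Nonempty := ⟨a, by simp⟩
  have hsum3u : ∑ y ∈ ({a, b, c} : Finset X), u y = u a + u b + u c := by
    rw [show ({a,b,c} : Finset X) = insert a (insert b {c}) from rfl,
      Finset.sum_insert (by simp [hab, hac]), Finset.sum_insert (by simp [hbc]),
      Finset.sum_singleton]; ring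
  have hsum3v : ∑ y ∈ ({a, b, c} : Finset X), v y = v a + v b + v c := by
    rw [show ({a,b,c} : Finset X) = insert a (insert b {c}) from rfl,
      Finset.sum_insert (by simp [hab, hac]), Finset.sum_insert (by simp [hbc]),
      Finset.sum_singleton]; ring
  have hsum2u : ∑ y ∈ ({a, b} : Finset X), u y = u a + u b := by
    rw [show ({a,b} : Finset X) = insert a {b} from rfl,
      Finset.sum_insert (by simp [hab]), Finset.sum_singleton]
  have hsum2v : ∑ y ∈ ({a, b} : Finset X), v y = v a + v b := by
    rw [show ({a,b} : Finset X) = insert a {b} from rfl,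
      Finset.sum_insert (by simp [hab]), Finset.sum_singleton]
  have hU3 : (0:ℝ) < u a + u b + u c := by have := hu a; have := hu b; have := hu c; linarith
  have hV3 : (0:ℝ) < v a + v b + v c := by have := hv a; have := hv b; have := hv c; linarith
  have hU2 : (0:ℝ) < u a + u b := by have := hu a; have := hu b; linarith
  have hV2 : (0:ℝ) < v a + v b := by have := hv a; have := hv b; linarith
  rw [hρ _ hS3 a (by simp), hρ _ hS3 b (by simp), hρ _ hS2 a (by simp), hρ _ hS2 b (by simp),
    hsum3u, hsum3v, hsum2u, hsum2v]
  have hα : α * (1 - α) ≠ 0 := ne_of_gt (mul_pos hα0 (by linarith))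
  have key : (α * (u a / (u a + u b + u c)) + (1 - α) * (v a / (v a + v b + v c))) *
      (α * (u b / (u a + u b)) + (1 - α) * (v b / (v a + v b))) -
      (α * (u b / (u a + u b + u c)) + (1 - α) * (v b / (v a + v b + v c))) *
      (α * (u a / (u a + u b)) + (1 - α) * (v a / (v a + v b))) =
      α * (1 - α) * ((u a * v b - u b * v a) * (v c * (u a + u b) - u c * (v a + v b)))
        / ((u a + u b + u c) * (v a + v b + v c) * (u a + u b) * (v a + v b)) := by
    field_simp
    ring
  rw [← sub_eq_zero, key, div_eq_zero_iff]
  have hden : ((u a + u b + u c) * (v a + v b + v c) * (u a + u b) * (v a + v b)) ≠ 0 := by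
    positivity
  rw [or_iff_left hden, mul_eq_zero, or_iff_right hα, mul_eq_zero, sub_eq_zero, sub_eq_zero]
  constructor
  · rintro (h | h)
    · exact Or.inl h
    · exact Or.inr h.symm
  · rintro (h | h)
    · exact Or.inl h
    · exact Or.inr h.symm
end

section
/- Suppose ρ^AI is consistent with the Luce Alignment Model with parameters (u, v, α), and let ρ^H and ρ^A be the Luce rules with utilities u and v respectively. Then for all nonempty S, T ⊆ X and x, y ∈ S ∩ T: Γ_{xy}(S,T|ρ^AI,ρ^H) = (1−α)·Γ_{xy}(S,T|ρ^A,ρ^H) = (1−α)·(u(y)v(x) − u(x)v(y))/(u(T)·v(S)), and Γ_{xy}(S,T|ρ^AI,ρ^A) = α·Γ_{xy}(S,T|ρ^H,ρ^A) = α·(u(x)v(y) − u(y)v(x))/(u(S)·v(T)). -/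
open Finset

theorem lam_cross_instability {X : Type*} [Fintype X] [DecidableEq X]
    (hcard : 3 ≤ Fintype.card X)
    (ρAI : X → Finset X → ℝ) (u v : X → ℝ) (α : ℝ)
    (hLAM : LAM1 ρAI u v α) :
    ∀ S T : Finset X, S.Nonempty → T.Nonempty →
      ∀ x ∈ S ∩ T, ∀ y ∈ S ∩ T,
        Gamma ρAI (LuceRule u) x y S T
          = (1 - α) * Gamma (LuceRule v) (LuceRule u) x y S T ∧
        Gamma ρAI (LuceRule u) x y S T
          = (1 - α) * ((u y * v x - u x * v y) / ((∑ a ∈ T, u a) * (∑ a ∈ S, v a))) ∧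
        Gamma ρAI (LuceRule v) x y S T
          = α * Gamma (LuceRule u) (LuceRule v) x y S T ∧
        Gamma ρAI (LuceRule v) x y S T
          = α * ((u x * v y - u y * v x) / ((∑ a ∈ S, u a) * (∑ a ∈ T, v a))) := by
  obtain ⟨hu, hv, hα0, hα1, hAI⟩ := hLAM
  intro S T hS hT x hx y hy
  have hxS : x ∈ S := (mem_inter.mp hx).1
  have hyS : y ∈ S := (mem_inter.mp hy).1
  have huS : (0:ℝ) < ∑ a ∈ S, u a := Finset.sum_pos (fun a _ => hu a) hS
  have huT : (0:ℝ) < ∑ a ∈ T, u a := Finset.sum_pos (fun a _ => hu a) hT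
  have hvS : (0:ℝ) < ∑ a ∈ S, v a := Finset.sum_pos (fun a _ => hv a) hS
  have hvT : (0:ℝ) < ∑ a ∈ T, v a := Finset.sum_pos (fun a _ => hv a) hT
  have ex : ρAI x S = α * (u x / ∑ a ∈ S, u a) + (1 - α) * (v x / ∑ a ∈ S, v a) :=
    hAI S hS x hxS
  have ey : ρAI y S = α * (u y / ∑ a ∈ S, u a) + (1 - α) * (v y / ∑ a ∈ S, v a) :=
    hAI S hS y hyS
  simp only [Gamma, LuceRule, ex, ey]
  refine ⟨by ring, ?_, by ring, ?_⟩ <;>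
    field_simp <;> ring
end

section
/- Suppose ρ^AI is consistent with the Luce Alignment Model with parameters (u, v, α), let ρ ∈ {ρ^H, ρ^A} be one of the corresponding Luce rules (with utility u or v respectively), let x, y, z, t be four distinct alternatives in X, let S = {x,y,z,t} and T = {x,y}, and assume the cross instabilities Γ_{xy}(S',T|ρ^AI,ρ) are nonzero for every S' with T ⊆ S' ⊆ S. Then 1/Γ_{xy}(S,T|ρ^AI,ρ) + 1/Γ_{xy}(T,T|ρ^AI,ρ) = 1/Γ_{xy}(S∖{t},T|ρ^AI,ρ) + 1/Γ_{xy}(S∖{z},T|ρ^AI,ρ). -/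
open Finset

/-!
Against the Luce rule with utility `u`, the `u`-component of the mixture `ρAI` drops out of the
cross instability, leaving `Γ_{xy}(S,T) = (1-α)(v x u y - v y u x) / (v(S) u(T))`; symmetrically
for utility `v`. So `1 / Γ_{xy}(S,T)` is a constant multiple of the additive set function `v(S)`
(resp. `u(S)`), and the identity is inclusion–exclusion for `S ∖ {t}` and `S ∖ {z}`, whose union
is `S` and whose intersection is `{x, y}`.
-/

namespace LAM1

variable {X : Type*} {ρAI : X → Finset X → ℝ} {u v : X → ℝ} {α : ℝ}

theorem gamma_luceRule_left (hLAM : LAM1 ρAI u v α) {x y : X} {S : Finset X} (hx : x ∈ S)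
    (hy : y ∈ S) (T : Finset X) :
    Gamma ρAI (LuceRule u) x y S T
      = (1 - α) * (v x * u y - v y * u x) / ((∑ a ∈ S, v a) * ∑ a ∈ T, u a) := by
  have hS : S.Nonempty := ⟨x, hx⟩
  rw [Gamma, LuceRule, LuceRule, hLAM.2.2.2.2 S hS x hx, hLAM.2.2.2.2 S hS y hy]
  ring

theorem gamma_luceRule_right (hLAM : LAM1 ρAI u v α) {x y : X} {S : Finset X} (hx : x ∈ S)
    (hy : y ∈ S) (T : Finset X) :
    Gamma ρAI (LuceRule v) x y S T
      = α * (u x * v y - u y * v x) / ((∑ a ∈ S, u a) * ∑ a ∈ T, v a) := by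
  have hS : S.Nonempty := ⟨x, hx⟩
  rw [Gamma, LuceRule, LuceRule, hLAM.2.2.2.2 S hS x hx, hLAM.2.2.2.2 S hS y hy]
  ring

theorem exists_one_div_gamma_eq_mul_sum (hLAM : LAM1 ρAI u v α) {ρ : X → Finset X → ℝ}
    (hρ : ρ = LuceRule u ∨ ρ = LuceRule v) (x y : X) (T : Finset X) :
    ∃ (c : ℝ) (w : X → ℝ), ∀ S : Finset X, x ∈ S → y ∈ S →
      1 / Gamma ρAI ρ x y S T = c * ∑ a ∈ S, w a := by
  -- If the numerator of `Γ` vanishes, both sides are `0` via `a / 0 = 0`.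
  rcases hρ with rfl | rfl
  · refine ⟨(∑ a ∈ T, u a) / ((1 - α) * (v x * u y - v y * u x)), v, fun S hx hy => ?_⟩
    rw [hLAM.gamma_luceRule_left hx hy, one_div_div]
    ring
  · refine ⟨(∑ a ∈ T, v a) / (α * (u x * v y - u y * v x)), u, fun S hx hy => ?_⟩
    rw [hLAM.gamma_luceRule_right hx hy, one_div_div]
    ring

theorem one_div_gamma_union_add_inter [DecidableEq X] (hLAM : LAM1 ρAI u v α)
    {ρ : X → Finset X → ℝ} (hρ : ρ = LuceRule u ∨ ρ = LuceRule v) {x y : X}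
    {S₁ S₂ : Finset X} (hx₁ : x ∈ S₁) (hy₁ : y ∈ S₁) (hx₂ : x ∈ S₂) (hy₂ : y ∈ S₂)
    (T : Finset X) :
    1 / Gamma ρAI ρ x y (S₁ ∪ S₂) T + 1 / Gamma ρAI ρ x y (S₁ ∩ S₂) T
      = 1 / Gamma ρAI ρ x y S₁ T + 1 / Gamma ρAI ρ x y S₂ T := by
  obtain ⟨c, w, hcw⟩ := hLAM.exists_one_div_gamma_eq_mul_sum hρ x y T
  rw [hcw _ (mem_union_left _ hx₁) (mem_union_left _ hy₁),
    hcw _ (mem_inter_of_mem hx₁ hx₂) (mem_inter_of_mem hy₁ hy₂), hcw _ hx₁ hy₁, hcw _ hx₂ hy₂,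
    ← mul_add, ← mul_add, sum_union_inter]

end LAM1

theorem lam_reciprocal_cross_instability_general {X : Type*} [DecidableEq X]
    (ρAI : X → Finset X → ℝ) (u v : X → ℝ) (α : ℝ)
    (hLAM : LAM1 ρAI u v α)
    (ρ : X → Finset X → ℝ) (hρ : ρ = LuceRule u ∨ ρ = LuceRule v)
    (x y z t : X) (hxz : x ≠ z) (hxt : x ≠ t)
    (hyz : y ≠ z) (hyt : y ≠ t) (hzt : z ≠ t) :
    1 / Gamma ρAI ρ x y {x, y, z, t} {x, y} + 1 / Gamma ρAI ρ x y {x, y} {x, y}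
      = 1 / Gamma ρAI ρ x y (({x, y, z, t} : Finset X) \ {t}) {x, y}
        + 1 / Gamma ρAI ρ x y (({x, y, z, t} : Finset X) \ {z}) {x, y} := by
  set S : Finset X := {x, y, z, t}
  have hunion : (S \ {t}) ∪ (S \ {z}) = S := by
    ext a; simp only [S, mem_union, mem_sdiff, mem_insert, mem_singleton]; grind
  have hinter : (S \ {t}) ∩ (S \ {z}) = {x, y} := by
    ext a; simp only [S, mem_inter, mem_sdiff, mem_insert, mem_singleton]; grind
  have hx₁ : x ∈ S \ {t} := by simp [S, hxt]
  have hy₁ : y ∈ S \ {t} := by simp [S, hyt]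
  have hx₂ : x ∈ S \ {z} := by simp [S, hxz]
  have hy₂ : y ∈ S \ {z} := by simp [S, hyz]
  rw [← LAM1.one_div_gamma_union_add_inter hLAM hρ hx₁ hy₁ hx₂ hy₂, hunion, hinter]

theorem lam_reciprocal_cross_instability {X : Type*} [Fintype X] [DecidableEq X]
    (hcard : 4 ≤ Fintype.card X)
    (ρAI : X → Finset X → ℝ) (u v : X → ℝ) (α : ℝ)
    (hLAM : LAM1 ρAI u v α)
    (ρ : X → Finset X → ℝ) (hρ : ρ = LuceRule u ∨ ρ = LuceRule v)
    (x y z t : X) (hxy : x ≠ y) (hxz : x ≠ z) (hxt : x ≠ t)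
    (hyz : y ≠ z) (hyt : y ≠ t) (hzt : z ≠ t)
    (hΓ : ∀ S' : Finset X, {x, y} ⊆ S' → S' ⊆ {x, y, z, t} →
      Gamma ρAI ρ x y S' {x, y} ≠ 0) :
    1 / Gamma ρAI ρ x y {x, y, z, t} {x, y} + 1 / Gamma ρAI ρ x y {x, y} {x, y}
      = 1 / Gamma ρAI ρ x y (({x, y, z, t} : Finset X) \ {t}) {x, y}
        + 1 / Gamma ρAI ρ x y (({x, y, z, t} : Finset X) \ {z}) {x, y} :=
  lam_reciprocal_cross_instability_general ρAI u v α hLAM ρ hρ x y z t hxz hxt hyz hyt hzt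
end

section
/- Suppose ρ^AI is consistent with the Luce Alignment Model with parameters (u, v, α) where u(x) = v(x) = 1 for a fixed alternative x. Let y, z, t be alternatives such that x, y, z, t are pairwise distinct, let S = {x,y,z,t} and T = {x,y}, and suppose ρ^AI(x,S')·u(y) ≠ ρ^AI(y,S') for every S' with T ⊆ S' ⊆ S. Then κ = u(y) satisfies the equation 1/(ρ^AI(x,S)·κ − ρ^AI(y,S)) + 1/(ρ^AI(x,T)·κ − ρ^AI(y,T)) = 1/(ρ^AI(x,S∖{t})·κ − ρ^AI(y,S∖{t})) + 1/(ρ^AI(x,S∖{z})·κ − ρ^AI(y,S∖{z})). Similarly, if ρ^AI(x,S')·v(y) ≠ ρ^AI(y,S') for every such S', then κ = v(y) satisfies the same equation. -/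
open Finset

/-!
In the Luce alignment model the `u`-parts cancel in `ρ(x,M)·u(y) − ρ(y,M)·u(x)`, which equals
`(1 − α)(v(x)u(y) − v(y)u(x)) / v(M)`. Its reciprocal is therefore a constant multiple of `v(M)`,
which is additive in the menu and so satisfies inclusion–exclusion; apply this to
`A = S ∖ {t}`, `B = S ∖ {z}`, for which `A ∪ B = S` and `A ∩ B = T`. Exchanging the roles of
`u` and `v` (and of `α` and `1 − α`) gives the equation for `v(y)`.
-/

namespace LAM1

variable {X : Type*} {ρ : X → Finset X → ℝ} {u v : X → ℝ} {α : ℝ}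

theorem swap (h : LAM1 ρ u v α) : LAM1 ρ v u (1 - α) := by
  obtain ⟨hu, hv, hα0, hα1, hρ⟩ := h
  refine ⟨hv, hu, by linarith, by linarith, fun S hS a ha => ?_⟩
  rw [hρ S hS a ha]
  ring

theorem mul_sub_mul_eq (h : LAM1 ρ u v α) {M : Finset X} {x y : X} (hx : x ∈ M) (hy : y ∈ M) :
    ρ x M * u y - ρ y M * u x = (1 - α) * (v x * u y - v y * u x) / ∑ b ∈ M, v b := by
  obtain ⟨-, -, -, -, hρ⟩ := h
  rw [hρ M ⟨x, hx⟩ x hx, hρ M ⟨x, hx⟩ y hy]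
  ring

theorem one_div_mul_sub_mul_union_add_inter [DecidableEq X] (h : LAM1 ρ u v α)
    {A B : Finset X} {x y : X} (hx : x ∈ A ∩ B) (hy : y ∈ A ∩ B) :
    1 / (ρ x (A ∪ B) * u y - ρ y (A ∪ B) * u x) + 1 / (ρ x (A ∩ B) * u y - ρ y (A ∩ B) * u x)
      = 1 / (ρ x A * u y - ρ y A * u x) + 1 / (ρ x B * u y - ρ y B * u x) := by
  have hxA := mem_of_mem_inter_left hx
  have hyA := mem_of_mem_inter_left hy
  have hxB := mem_of_mem_inter_right hx
  have hyB := mem_of_mem_inter_right hy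
  rw [h.mul_sub_mul_eq (mem_union_left B hxA) (mem_union_left B hyA), h.mul_sub_mul_eq hx hy,
    h.mul_sub_mul_eq hxA hyA, h.mul_sub_mul_eq hxB hyB]
  simp only [one_div_div, ← add_div, sum_union_inter]

end LAM1

theorem lam_cubic_equation_for_utilities_general {X : Type*} [DecidableEq X]
    (ρAI : X → Finset X → ℝ) (u v : X → ℝ) (α : ℝ)
    (hLAM : LAM1 ρAI u v α)
    (x : X) (hux : u x = 1) (hvx : v x = 1)
    (y z t : X) (hxz : x ≠ z) (hxt : x ≠ t)
    (hyz : y ≠ z) (hyt : y ≠ t) (hzt : z ≠ t) :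
    ((∀ S' : Finset X, {x, y} ⊆ S' → S' ⊆ {x, y, z, t} →
        ρAI x S' * u y ≠ ρAI y S') →
      1 / (ρAI x {x, y, z, t} * u y - ρAI y {x, y, z, t})
          + 1 / (ρAI x {x, y} * u y - ρAI y {x, y})
        = 1 / (ρAI x (({x, y, z, t} : Finset X) \ {t}) * u y
              - ρAI y (({x, y, z, t} : Finset X) \ {t}))
          + 1 / (ρAI x (({x, y, z, t} : Finset X) \ {z}) * u y
              - ρAI y (({x, y, z, t} : Finset X) \ {z}))) ∧
    ((∀ S' : Finset X, {x, y} ⊆ S' → S' ⊆ {x, y, z, t} →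
        ρAI x S' * v y ≠ ρAI y S') →
      1 / (ρAI x {x, y, z, t} * v y - ρAI y {x, y, z, t})
          + 1 / (ρAI x {x, y} * v y - ρAI y {x, y})
        = 1 / (ρAI x (({x, y, z, t} : Finset X) \ {t}) * v y
              - ρAI y (({x, y, z, t} : Finset X) \ {t}))
          + 1 / (ρAI x (({x, y, z, t} : Finset X) \ {z}) * v y
              - ρAI y (({x, y, z, t} : Finset X) \ {z}))) := by
  set S : Finset X := {x, y, z, t}
  have hunion : (S \ {t}) ∪ (S \ {z}) = S := by
    ext a; simp only [S, mem_union, mem_sdiff, mem_insert, mem_singleton]; grind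
  have hinter : (S \ {t}) ∩ (S \ {z}) = {x, y} := by
    ext a; simp only [S, mem_inter, mem_sdiff, mem_insert, mem_singleton]; grind
  have hx : x ∈ (S \ {t}) ∩ (S \ {z}) := by simp [hinter]
  have hy : y ∈ (S \ {t}) ∩ (S \ {z}) := by simp [hinter]
  have hu := hLAM.one_div_mul_sub_mul_union_add_inter hx hy
  have hv := hLAM.swap.one_div_mul_sub_mul_union_add_inter hx hy
  rw [hunion, hinter, hux] at hu
  rw [hunion, hinter, hvx] at hv
  simp only [mul_one] at hu hv
  exact ⟨fun _ => hu, fun _ => hv⟩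

theorem lam_cubic_equation_for_utilities {X : Type*} [Fintype X] [DecidableEq X]
    (hcard : 4 ≤ Fintype.card X)
    (ρAI : X → Finset X → ℝ) (u v : X → ℝ) (α : ℝ)
    (hLAM : LAM1 ρAI u v α)
    (x : X) (hux : u x = 1) (hvx : v x = 1)
    (y z t : X) (hxy : x ≠ y) (hxz : x ≠ z) (hxt : x ≠ t)
    (hyz : y ≠ z) (hyt : y ≠ t) (hzt : z ≠ t) :
    ((∀ S' : Finset X, {x, y} ⊆ S' → S' ⊆ {x, y, z, t} →
        ρAI x S' * u y ≠ ρAI y S') →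
      1 / (ρAI x {x, y, z, t} * u y - ρAI y {x, y, z, t})
          + 1 / (ρAI x {x, y} * u y - ρAI y {x, y})
        = 1 / (ρAI x (({x, y, z, t} : Finset X) \ {t}) * u y
              - ρAI y (({x, y, z, t} : Finset X) \ {t}))
          + 1 / (ρAI x (({x, y, z, t} : Finset X) \ {z}) * u y
              - ρAI y (({x, y, z, t} : Finset X) \ {z}))) ∧
    ((∀ S' : Finset X, {x, y} ⊆ S' → S' ⊆ {x, y, z, t} →
        ρAI x S' * v y ≠ ρAI y S') →
      1 / (ρAI x {x, y, z, t} * v y - ρAI y {x, y, z, t})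
          + 1 / (ρAI x {x, y} * v y - ρAI y {x, y})
        = 1 / (ρAI x (({x, y, z, t} : Finset X) \ {t}) * v y
              - ρAI y (({x, y, z, t} : Finset X) \ {t}))
          + 1 / (ρAI x (({x, y, z, t} : Finset X) \ {z}) * v y
              - ρAI y (({x, y, z, t} : Finset X) \ {z}))) :=
  lam_cubic_equation_for_utilities_general ρAI u v α hLAM x hux hvx y z t hxz hxt hyz hyt hzt
end
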